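/- arXiv:0707.1733 — 2 statements merged into one kernel-verified Lean document; each statement's English description precedes it below -/
import Mathlib

section
/- Let λ ∈ Λ^+ with (λ,1) ∈ Σ^p. (i) The map φ_T^{(λ,0)} ↦ φ_T^{(λ,1)} for T ∈ T_0^p(λ) is an injective homomorphism Z_p^{(λ,0)} → Z_p^{(λ,1)} of right S^p-modules. (ii) The map φ_T^{(λ,1)} ↦ φ_T for T ∈ T_0(λ) is an isomorphism Z_p^{(λ,1)} ≅ W^λ of right S^p-modules, where the Weyl module W^λ of S(Λ) is regarded as an S^p-module by restriction. -/
/-!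
Common framework for the formalization of results of Shoji–Wada,
"Cyclotomic q-Schur algebras associated to the Ariki-Koike algebra".
-/

open scoped BigOperators TensorProduct
open MulOpposite

noncomputable section

/-! ## Multicompositions -/

/-- An `r`-multicomposition of `n`, whose `k`-th component is a composition
of length `≤ m k`. -/
structure MultiComp (n r : ℕ) (m : Fin r → ℕ) where
  part : (k : Fin r) → Fin (m k) → ℕ
  sum_eq : (∑ k, ∑ i, part k i) = n

namespace MultiComp

variable {n r : ℕ} {m : Fin r → ℕ}

theorem part_injective : Function.Injective (part : MultiComp n r m → _) := by
  rintro ⟨a, _⟩ ⟨b, _⟩ h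
  simpa using h

instance : DecidableEq (MultiComp n r m) := fun a b =>
  decidable_of_iff (a.part = b.part) part_injective.eq_iff

theorem part_le_n (lam : MultiComp n r m) (k : Fin r) (i : Fin (m k)) :
    lam.part k i ≤ n := by
  calc lam.part k i ≤ ∑ i, lam.part k i :=
        Finset.single_le_sum (fun _ _ => Nat.zero_le _) (Finset.mem_univ i)
    _ ≤ ∑ k, ∑ i, lam.part k i :=
        Finset.single_le_sum (f := fun k => ∑ i, lam.part k i)
          (fun _ _ => Nat.zero_le _) (Finset.mem_univ k)
    _ = n := lam.sum_eq

instance : Fintype (MultiComp n r m) :=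
  Fintype.ofInjective
    (fun lam (k : Fin r) (i : Fin (m k)) =>
      (⟨lam.part k i, Nat.lt_succ_of_le (part_le_n lam k i)⟩ : Fin (n + 1)))
    (fun a b h => part_injective (by
      funext k i
      exact congrArg Fin.val (congrFun (congrFun h k) i)))

/-- an `r`-multipartition: every component is weakly decreasing -/
def IsPartition (lam : MultiComp n r m) : Prop :=
  ∀ (k : Fin r) (i j : Fin (m k)), i ≤ j → lam.part k j ≤ lam.part k i

instance (lam : MultiComp n r m) : Decidable lam.IsPartition := by
  unfold IsPartition; infer_instance

/-- the size `|λ^{(k)}|` of the `k`-th component -/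
def compSize (lam : MultiComp n r m) (k : Fin r) : ℕ := ∑ i, lam.part k i

/-- the dominance order `λ ⊵ μ` on multicompositions -/
def Dominates (lam mu : MultiComp n r m) : Prop :=
  ∀ (k : Fin r) (i : Fin (m k)),
    ((∑ c ∈ Finset.univ.filter fun c => c < k, mu.compSize c) +
        ∑ j ∈ Finset.univ.filter fun j => j ≤ i, mu.part k j) ≤
      (∑ c ∈ Finset.univ.filter fun c => c < k, lam.compSize c) +
        ∑ j ∈ Finset.univ.filter fun j => j ≤ i, lam.part k j

/-- the strict dominance order `λ ⊳ μ` -/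
def SDominates (lam mu : MultiComp n r m) : Prop :=
  Dominates lam mu ∧ lam ≠ mu

end MultiComp

/-- `Λ` is a saturated set of multicompositions: it contains every multipartition
dominating one of its members. -/
def Saturated {n r : ℕ} {m : Fin r → ℕ} (Λ : Finset (MultiComp n r m)) : Prop :=
  ∀ lam : MultiComp n r m, lam.IsPartition →
    (∃ mu ∈ Λ, MultiComp.Dominates lam mu) → lam ∈ Λ

/-! ## Tableaux -/

/-- the set of entries `(i,k)` (row `i` of component `k`) for tableaux -/
abbrev MCEntry (r : ℕ) (m : Fin r → ℕ) := Σ k : Fin r, Fin (m k)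

/-- the total order on entries: `(i₁,k₁) ≤ (i₂,k₂)` iff `k₁ < k₂`, or `k₁ = k₂` and
`i₁ ≤ i₂`. -/
def entryLE {r : ℕ} {m : Fin r → ℕ} (a b : MCEntry r m) : Prop :=
  a.1 < b.1 ∨ (a.1 = b.1 ∧ (a.2 : ℕ) ≤ (b.2 : ℕ))

/-- the associated strict order on entries -/
def entryLT {r : ℕ} {m : Fin r → ℕ} (a b : MCEntry r m) : Prop :=
  a.1 < b.1 ∨ (a.1 = b.1 ∧ (a.2 : ℕ) < (b.2 : ℕ))

/-- the cells `(k, i, j)` (component `k`, row `i`, column `j`) of the Young diagram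
of a multicomposition -/
abbrev MultiComp.Cell {n r : ℕ} {m : Fin r → ℕ} (lam : MultiComp n r m) :=
  Σ (k : Fin r) (i : Fin (m k)), Fin (lam.part k i)

/-- Semistandard tableaux of shape `lam` and type `mu` in the sense of
Dipper–James–Mathas: rows weakly increase, columns strictly increase, the entries of
the `k`-th component have second coordinate `≥ k`, and for each entry `(i,k)` the
number of cells carrying it equals `mu.part k i`. -/
structure SSTab {n r : ℕ} {m : Fin r → ℕ} (lam mu : MultiComp n r m) where
  entry : lam.Cell → MCEntry r m
  rowWeak : ∀ (k : Fin r) (i : Fin (m k)) (j j' : Fin (lam.part k i)),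
    j ≤ j' → entryLE (entry ⟨k, i, j⟩) (entry ⟨k, i, j'⟩)
  colStrict : ∀ (k : Fin r) (i i' : Fin (m k)) (j : ℕ)
    (hj : j < lam.part k i) (hj' : j < lam.part k i'), i < i' →
    entryLT (entry ⟨k, i, ⟨j, hj⟩⟩) (entry ⟨k, i', ⟨j, hj'⟩⟩)
  compLE : ∀ c : lam.Cell, c.1 ≤ (entry c).1
  typeCount : ∀ e : MCEntry r m,
    mu.part e.1 e.2 = Fintype.card {c : lam.Cell // entry c = e}

namespace SSTab

variable {n r : ℕ} {m : Fin r → ℕ} {lam mu : MultiComp n r m}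

theorem entry_injective : Function.Injective (entry : SSTab lam mu → _) := by
  rintro ⟨a, _, _, _, _⟩ ⟨b, _, _, _, _⟩ h
  simpa using h

instance : Fintype (SSTab lam mu) := Fintype.ofInjective entry entry_injective

instance : DecidableEq (SSTab lam mu) := fun a b =>
  decidable_of_iff (a.entry = b.entry) entry_injective.eq_iff

end SSTab

/-- Standard tableaux of shape `lam`: bijective fillings of the diagram by the
letters `1, …, n`, increasing along rows and down columns. -/
structure StdTab {n r : ℕ} {m : Fin r → ℕ} (lam : MultiComp n r m) where
  entry : lam.Cell → Fin n
  bij : Function.Bijective entry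
  rowStrict : ∀ (k : Fin r) (i : Fin (m k)) (j j' : Fin (lam.part k i)),
    j < j' → entry ⟨k, i, j⟩ < entry ⟨k, i, j'⟩
  colStrict : ∀ (k : Fin r) (i i' : Fin (m k)) (j : ℕ)
    (hj : j < lam.part k i) (hj' : j < lam.part k i'), i < i' →
    entry ⟨k, i, ⟨j, hj⟩⟩ < entry ⟨k, i', ⟨j, hj'⟩⟩

namespace StdTab

variable {n r : ℕ} {m : Fin r → ℕ} {lam : MultiComp n r m}

theorem entry_injective : Function.Injective (entry : StdTab lam → _) := by
  rintro ⟨a, _, _, _⟩ ⟨b, _, _, _⟩ h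
  simpa using h

instance : Fintype (StdTab lam) := Fintype.ofInjective entry entry_injective

end StdTab
/-! ## The block structure attached to `p = (r₁, …, r_g)` -/

/-- componentwise comparison of vectors in `ℤ_{≥0}^g` -/
def vecLE {g : ℕ} (f h : Fin g → ℕ) : Prop := ∀ b, f b ≤ h b

instance {g : ℕ} (f h : Fin g → ℕ) : Decidable (vecLE f h) := by
  unfold vecLE; infer_instance

/-- strict componentwise comparison: `f ≤ h` componentwise and `f ≠ h` -/
def vecLT {g : ℕ} (f h : Fin g → ℕ) : Prop := vecLE f h ∧ f ≠ h

instance {g : ℕ} (f h : Fin g → ℕ) : Decidable (vecLT f h) := by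
  unfold vecLT; infer_instance

/-- The datum of `p = (r₁, …, r_g)`, encoded by the map sending a component
`k ∈ {1, …, r}` to its block: the fibers of `π` are the intervals
`{p_b + 1, …, p_b + r_b}`, of sizes `r_b > 0`. -/
structure BlockCtx (r g : ℕ) where
  π : Fin r → Fin g
  mono : Monotone π
  surj : Function.Surjective π

namespace BlockCtx

variable {r g : ℕ} (P : BlockCtx r g) {n : ℕ} {m : Fin r → ℕ}

/-- `α_p(μ) = (n₁, …, n_g)`, `n_b = |μ^{[b]}|` -/
def alphaP (mu : MultiComp n r m) : Fin g → ℕ := fun b =>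
  ∑ k ∈ Finset.univ.filter fun k => P.π k = b, mu.compSize k

/-- `a_p(μ) = (a₁, …, a_g)`, `a_b = n₁ + ⋯ + n_{b-1}` -/
def aP (mu : MultiComp n r m) : Fin g → ℕ := fun b =>
  ∑ k ∈ Finset.univ.filter fun k => P.π k < b, mu.compSize k

/-- `r_b`, the number of components in block `b` -/
def rblk (b : Fin g) : ℕ := (Finset.univ.filter fun k => P.π k = b).card

/-- the components in block `b`, listed in increasing order -/
def blkEquiv (b : Fin g) :
    Fin (P.rblk b) ≃o {x // x ∈ Finset.univ.filter fun k => P.π k = b} :=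
  (Finset.univ.filter fun k => P.π k = b).orderIsoOfFin rfl

/-- `m^{[b]}`, the row bounds of block `b` -/
def mblk (m : Fin r → ℕ) (b : Fin g) : Fin (P.rblk b) → ℕ :=
  fun i => m ((P.blkEquiv b i : {x // x ∈ Finset.univ.filter fun k => P.π k = b}) : Fin r)

/-- the block component `μ^{[b]}` of a multicomposition, an `r_b`-multicomposition
of `n_b = α_p(μ)_b` -/
def restrictTo (mu : MultiComp n r m) (b : Fin g) (nb : ℕ)
    (h : P.alphaP mu b = nb) : MultiComp nb (P.rblk b) (P.mblk m b) where
  part := fun k i => mu.part ((P.blkEquiv b k :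
    {x // x ∈ Finset.univ.filter fun k => P.π k = b}) : Fin r) i
  sum_eq := by
    subst h
    calc (∑ k : Fin (P.rblk b), ∑ i, mu.part ((P.blkEquiv b k :
            {x // x ∈ Finset.univ.filter fun k => P.π k = b}) : Fin r) i)
        = ∑ x : {x // x ∈ Finset.univ.filter fun k => P.π k = b},
            mu.compSize (x : Fin r) :=
          Fintype.sum_equiv (P.blkEquiv b).toEquiv _ _ (fun _ => rfl)
      _ = ∑ k ∈ Finset.univ.filter fun k => P.π k = b, mu.compSize k :=
          Finset.sum_coe_sort _ _
      _ = P.alphaP mu b := rfl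

theorem restrictTo_isPartition (mu : MultiComp n r m) (hmu : mu.IsPartition)
    (b : Fin g) (nb : ℕ) (h : P.alphaP mu b = nb) :
    (P.restrictTo mu b nb h).IsPartition :=
  fun k i j hij => hmu _ i j hij

/-- the largest component index in block `b` (that is, `p_b + r_b`) -/
def blockLast (b : Fin g) : Fin r :=
  (Finset.univ.filter fun k => P.π k = b).max' (by
    obtain ⟨k, hk⟩ := P.surj b
    exact ⟨k, Finset.mem_filter.2 ⟨Finset.mem_univ _, hk⟩⟩)

end BlockCtx
/-! ## The cyclotomic q-Schur algebra with its Dipper–James–Mathas cellular basis -/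

/-- the multicompositions belonging to `Λ` -/
abbrev LamS {n r : ℕ} {m : Fin r → ℕ} (Λ : Finset (MultiComp n r m)) := {x // x ∈ Λ}

/-- `Λ⁺`, the multipartitions belonging to `Λ` -/
abbrev LamP {n r : ℕ} {m : Fin r → ℕ} (Λ : Finset (MultiComp n r m)) :=
  {x : MultiComp n r m // x ∈ Λ ∧ x.IsPartition}

/-- the index set of the Dipper–James–Mathas cellular basis
`{φ_{S,T} : S ∈ T₀(λ,μ), T ∈ T₀(λ,ν), λ ∈ Λ⁺, μ, ν ∈ Λ}` -/
abbrev DJMIndex {n r : ℕ} {m : Fin r → ℕ} (Λ : Finset (MultiComp n r m)) :=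
  Σ (lam : LamP Λ) (mu : LamS Λ) (nu : LamS Λ), SSTab lam.1 mu.1 × SSTab lam.1 nu.1

/-- Abstract datum of the cyclotomic q-Schur algebra `S(Λ) = End_H(⊕_{μ∈Λ} M^μ)`
together with its Dipper–James–Mathas cellular basis `φ_{S,T}`
(`bas ⟨λ, μ, ν, (S, T)⟩` is the basis element `φ_{S,T} ∈ Hom_H(M^ν, M^μ)` for
`S ∈ T₀(λ,μ)`, `T ∈ T₀(λ,ν)`), with its cellular anti-automorphism `*`
(`astar`), and the orthogonal idempotents `φ_μ = id_{M^μ}` (`phiId`). -/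
structure SchurAlgebra (R : Type) [CommRing R] {n r : ℕ} {m : Fin r → ℕ}
    (Λ : Finset (MultiComp n r m)) where
  carrier : Type
  [ringI : Ring carrier]
  [algI : Algebra R carrier]
  bas : Module.Basis (DJMIndex Λ) R carrier
  astar : carrier →ₗ[R] carrier
  astar_mul : ∀ x y : carrier, astar (x * y) = astar y * astar x
  astar_bas : ∀ (lam : LamP Λ) (mu nu : LamS Λ)
    (S : SSTab lam.1 mu.1) (T : SSTab lam.1 nu.1),
    astar (bas ⟨lam, mu, nu, (S, T)⟩) = bas ⟨lam, nu, mu, (T, S)⟩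
  phiId : LamS Λ → carrier
  phiId_sum : ∑ mu : LamS Λ, phiId mu = 1
  phiId_mul : ∀ mu nu : LamS Λ, phiId mu * phiId nu = if mu = nu then phiId mu else 0
  phiId_mul_bas : ∀ (lam : LamP Λ) (mu nu : LamS Λ) (S : SSTab lam.1 mu.1)
    (T : SSTab lam.1 nu.1) (rho : LamS Λ),
    phiId rho * bas ⟨lam, mu, nu, (S, T)⟩ =
      if rho = mu then bas ⟨lam, mu, nu, (S, T)⟩ else 0
  bas_mul_phiId : ∀ (lam : LamP Λ) (mu nu : LamS Λ) (S : SSTab lam.1 mu.1)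
    (T : SSTab lam.1 nu.1) (rho : LamS Λ),
    bas ⟨lam, mu, nu, (S, T)⟩ * phiId rho =
      if rho = nu then bas ⟨lam, mu, nu, (S, T)⟩ else 0
  cellular : ∀ (a : carrier) (lam : LamP Λ) (mu : LamS Λ) (S : SSTab lam.1 mu.1),
    ∃ c : (Σ mu' : LamS Λ, SSTab lam.1 mu'.1) → R,
      ∀ (nu : LamS Λ) (T : SSTab lam.1 nu.1),
        a * bas ⟨lam, mu, nu, (S, T)⟩ -
            ∑ x : Σ mu' : LamS Λ, SSTab lam.1 mu'.1,
              c x • bas ⟨lam, x.1, nu, (x.2, T)⟩ ∈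
          Submodule.span R
            {y : carrier | ∃ (lam' : LamP Λ) (mu' nu' : LamS Λ)
              (S' : SSTab lam'.1 mu'.1) (T' : SSTab lam'.1 nu'.1),
              MultiComp.SDominates lam'.1 lam.1 ∧
              y = bas ⟨lam', mu', nu', (S', T')⟩}

namespace SchurAlgebra

variable {R : Type} [CommRing R] {n r : ℕ} {m : Fin r → ℕ}
variable {Λ : Finset (MultiComp n r m)}

instance (SA : SchurAlgebra R Λ) : Ring SA.carrier := SA.ringI
instance (SA : SchurAlgebra R Λ) : Algebra R SA.carrier := SA.algI

/-- the two-sided ideal `S(Λ)^{∨λ}`, spanned by the `φ_{S,T}` of shape strictly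
dominating `λ` -/
def SVee (SA : SchurAlgebra R Λ) (lam : LamP Λ) : Submodule R SA.carrier :=
  Submodule.span R
    {y : SA.carrier | ∃ (lam' : LamP Λ) (mu' nu' : LamS Λ)
      (S' : SSTab lam'.1 mu'.1) (T' : SSTab lam'.1 nu'.1),
      MultiComp.SDominates lam'.1 lam.1 ∧ y = SA.bas ⟨lam', mu', nu', (S', T')⟩}

end SchurAlgebra

/-! ## The parabolic subalgebra `S^p` and its combinatorics -/

section PLayer

variable {R : Type} [CommRing R] {n r g : ℕ} {m : Fin r → ℕ}
variable {Λ : Finset (MultiComp n r m)}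

/-- a semistandard tableau of shape `λ` together with its type `μ`,
i.e. an element of `T₀(λ) = ⋃_{μ ∈ Λ} T₀(λ,μ)` -/
abbrev TabOf (Λ : Finset (MultiComp n r m)) (lam : LamP Λ) :=
  Σ mu : LamS Λ, SSTab lam.1 mu.1

/-- the condition defining `T₀^p(λ,μ) ⊆ T₀(λ,μ)`: `a_p(λ) = a_p(μ)` -/
def pCond (P : BlockCtx r g) (lam : LamP Λ) (x : TabOf Λ lam) : Prop :=
  P.aP x.1.1 = P.aP lam.1

instance (P : BlockCtx r g) (lam : LamP Λ) (x : TabOf Λ lam) :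
    Decidable (pCond P lam x) := by
  unfold pCond; infer_instance

/-- `T₀^p(λ)`, the tableaux whose type has the same `a_p` as the shape -/
abbrev PTab (P : BlockCtx r g) (lam : LamP Λ) := {x : TabOf Λ lam // pCond P lam x}

/-- `x` is the canonical tableau `T^λ = λ(t^λ)` of shape and type `λ` -/
def IsCanonical (lam : LamP Λ) (x : TabOf Λ lam) : Prop :=
  x.1.1 = lam.1 ∧ ∀ c : lam.1.Cell, x.2.entry c = ⟨c.1, c.2.1⟩

namespace SchurAlgebra

/-- the subset `Z^p` of the cellular basis: those `φ_{S,T}` with `S ∈ T₀(λ,μ)`,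
`T ∈ T₀(λ,ν)` such that `a_p(λ) > a_p(μ)` whenever `α_p(μ) ≠ α_p(ν)` -/
def ZpSet (SA : SchurAlgebra R Λ) (P : BlockCtx r g) : Set SA.carrier :=
  {x | ∃ (lam : LamP Λ) (mu nu : LamS Λ) (S : SSTab lam.1 mu.1) (T : SSTab lam.1 nu.1),
    (P.alphaP mu.1 ≠ P.alphaP nu.1 → vecLT (P.aP mu.1) (P.aP lam.1)) ∧
    x = SA.bas ⟨lam, mu, nu, (S, T)⟩}

/-- the subset `Z^p \ {φ_{S,T} : S, T ∈ T₀^p(λ)}` spanning the two-sided ideal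
`\hat S^p` of `S^p` -/
def ZpHatSet (SA : SchurAlgebra R Λ) (P : BlockCtx r g) : Set SA.carrier :=
  {x | ∃ (lam : LamP Λ) (mu nu : LamS Λ) (S : SSTab lam.1 mu.1) (T : SSTab lam.1 nu.1),
    (P.alphaP mu.1 ≠ P.alphaP nu.1 → vecLT (P.aP mu.1) (P.aP lam.1)) ∧
    ¬(P.aP mu.1 = P.aP lam.1 ∧ P.aP nu.1 = P.aP lam.1) ∧
    x = SA.bas ⟨lam, mu, nu, (S, T)⟩}

end SchurAlgebra

/-- the index set `Σ^p ⊆ Λ⁺ × {0,1}`, where `(λ,1)` is kept only if there exists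
`μ ∈ Λ` with `a_p(λ) > a_p(μ)` and `T₀(λ,μ) ≠ ∅` -/
def SigmaPIdx (Λ : Finset (MultiComp n r m)) (P : BlockCtx r g) :=
  {e : LamP Λ × Bool // e.2 = true →
    ∃ mu : LamS Λ, vecLT (P.aP mu.1) (P.aP e.1.1) ∧ Nonempty (SSTab e.1.1 mu.1)}

/-- the partial order on `Σ^p`: `(λ₁,ε₁) > (λ₂,ε₂)` iff `λ₁ ⊳ λ₂`, or `λ₁ = λ₂`
and `ε₁ > ε₂` -/
def sigmaGT (P : BlockCtx r g) (e f : SigmaPIdx Λ P) : Prop :=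
  MultiComp.SDominates e.1.1.1 f.1.1.1 ∨
    (e.1.1 = f.1.1 ∧ e.1.2 = true ∧ f.1.2 = false)

/-- the element `(λ, 0)` of `Σ^p` -/
def eZero (P : BlockCtx r g) (lam : LamP Λ) : SigmaPIdx Λ P :=
  ⟨(lam, false), fun h => (Bool.false_ne_true h).elim⟩

/-- the index set `I^p(ε)`: `T₀^p(λ)` for `ε = (λ,0)`, and
`⋃ {T₀(λ,μ) : a_p(λ) > a_p(μ)}` for `ε = (λ,1)` -/
def pIp (P : BlockCtx r g) (e : SigmaPIdx Λ P) : Set (TabOf Λ e.1.1) :=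
  {x | (e.1.2 = true ∧ vecLT (P.aP x.1.1) (P.aP e.1.1.1)) ∨
       (e.1.2 = false ∧ pCond P e.1.1 x)}

/-- the index set `J^p(ε)`: `T₀^p(λ)` for `ε = (λ,0)`, and `T₀(λ)` for `ε = (λ,1)` -/
def pJp (P : BlockCtx r g) (e : SigmaPIdx Λ P) : Set (TabOf Λ e.1.1) :=
  {x | e.1.2 = true ∨ pCond P e.1.1 x}

instance (P : BlockCtx r g) (e : SigmaPIdx Λ P) :
    DecidablePred (· ∈ pIp (Λ := Λ) P e) := fun x =>
  decidable_of_iff ((e.1.2 = true ∧ vecLT (P.aP x.1.1) (P.aP e.1.1.1)) ∨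
    (e.1.2 = false ∧ pCond P e.1.1 x)) Iff.rfl

instance (P : BlockCtx r g) (e : SigmaPIdx Λ P) :
    DecidablePred (· ∈ pJp (Λ := Λ) P e) := fun x =>
  decidable_of_iff (e.1.2 = true ∨ pCond P e.1.1 x) Iff.rfl

namespace SchurAlgebra

/-- the set `Z^p(ε) = {φ_{S,T} : S ∈ I^p(ε), T ∈ J^p(ε)}` -/
def ZpAt (SA : SchurAlgebra R Λ) (P : BlockCtx r g) (e : SigmaPIdx Λ P) :
    Set SA.carrier :=
  {x | ∃ S ∈ pIp P e, ∃ T ∈ pJp P e, x = SA.bas ⟨e.1.1, S.1, T.1, (S.2, T.2)⟩}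

/-- the ideal `(S^p)^{∨ε}`, spanned by the `Z^p(ε')` for `ε' > ε` -/
def SpVee (SA : SchurAlgebra R Λ) (P : BlockCtx r g) (e : SigmaPIdx Λ P) :
    Submodule R SA.carrier :=
  Submodule.span R (⋃ e' : {f : SigmaPIdx Λ P // sigmaGT P f e}, SA.ZpAt P e'.1)

end SchurAlgebra

end PLayer
/-! ## Based right modules and composition multiplicities -/

/-- a right `A`-module which is free as an `R`-module with a distinguished basis
indexed by `ι`; right `A`-modules are treated as left `Aᵐᵒᵖ`-modules -/
structure BasedRightModule (R : Type) [CommRing R] (A : Type) [Ring A]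
    [Algebra R A] (ι : Type) where
  M : Type
  [abGrp : AddCommGroup M]
  [modR : Module R M]
  [modA : Module Aᵐᵒᵖ M]
  [tower : IsScalarTower R Aᵐᵒᵖ M]
  bas : Module.Basis ι R M

namespace BasedRightModule

variable {R : Type} [CommRing R] {A : Type} [Ring A] [Algebra R A] {ι : Type}

instance (X : BasedRightModule R A ι) : AddCommGroup X.M := X.abGrp
instance (X : BasedRightModule R A ι) : Module R X.M := X.modR
instance (X : BasedRightModule R A ι) : Module Aᵐᵒᵖ X.M := X.modA
instance (X : BasedRightModule R A ι) : IsScalarTower R Aᵐᵒᵖ X.M := X.tower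

end BasedRightModule

/-- `N` is the radical of the bilinear form on the based module `X` whose Gram
matrix in the distinguished basis is `f` -/
def IsFormRadical {R : Type} [CommRing R] {A : Type} [Ring A] [Algebra R A]
    {ι : Type} [Fintype ι] (X : BasedRightModule R A ι) (f : ι → ι → R)
    (N : Submodule Aᵐᵒᵖ X.M) : Prop :=
  ∀ x : X.M, x ∈ N ↔ ∀ t : ι, (∑ s : ι, X.bas.repr x s * f s t) = 0

open Classical in
/-- the number of factors of the composition series `s` isomorphic to `L`: the
multiplicity `[M : L]` when `s` runs from `⊥` to `⊤` -/
noncomputable def factorMult {A : Type} [Ring A] {M : Type} [AddCommGroup M]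
    [Module A M] (s : CompositionSeries (Submodule A M)) (L : Type)
    [AddCommGroup L] [Module A L] : ℕ :=
  (Finset.univ.filter fun i : Fin s.length =>
    Nonempty ((↥(s i.succ) ⧸ Submodule.comap (s i.succ).subtype (s i.castSucc))
      ≃ₗ[A] L)).card

/-- a composition series of the full module: from `⊥` to `⊤` -/
def IsFullSeries {A : Type} [Ring A] {M : Type} [AddCommGroup M] [Module A M]
    (s : CompositionSeries (Submodule A M)) : Prop :=
  s.head = ⊥ ∧ s.last = ⊤
/-! ## The quotient algebra `\bar S^p` -/

section BarLayer

variable {R : Type} [CommRing R] {n r g : ℕ} {m : Fin r → ℕ}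
variable {Λ : Finset (MultiComp n r m)}

/-- Abstract datum of the quotient algebra `\bar S^p = S^p / \hat S^p`:
an `R`-algebra `B` together with the surjective projection `proj : S^p → B`,
whose kernel is the span of `Z^p \ {φ_{S,T} : S, T ∈ T₀^p(λ)}`, and the images
`\barφ_{S,T}` (`barphi`) of the basis elements, which form an `R`-basis of `B`. -/
structure BarSchurAlgebra {R : Type} [CommRing R] {n r : ℕ} {m : Fin r → ℕ}
    {Λ : Finset (MultiComp n r m)} {g : ℕ} (SA : SchurAlgebra R Λ)
    (P : BlockCtx r g) (Sp : Subalgebra R SA.carrier) where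
  B : Type
  [ringB : Ring B]
  [algB : Algebra R B]
  proj : ↥Sp →ₐ[R] B
  surj : Function.Surjective proj
  barphi : (lam : LamP Λ) → PTab P lam → PTab P lam → B
  bbas : Module.Basis (Σ lam : LamP Λ, PTab P lam × PTab P lam) R B
  bbas_eq : ∀ (lam : LamP Λ) (S T : PTab P lam), bbas ⟨lam, (S, T)⟩ = barphi lam S T
  proj_bas : ∀ (lam : LamP Λ) (mu nu : LamS Λ) (S : SSTab lam.1 mu.1)
    (T : SSTab lam.1 nu.1) (x : ↥Sp),
    (x : SA.carrier) = SA.bas ⟨lam, mu, nu, (S, T)⟩ →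
    proj x = if h : pCond P lam ⟨mu, S⟩ ∧ pCond P lam ⟨nu, T⟩
      then barphi lam ⟨⟨mu, S⟩, h.1⟩ ⟨⟨nu, T⟩, h.2⟩ else 0
  ker_char : ∀ x : ↥Sp, proj x = 0 ↔ (x : SA.carrier) ∈
    Submodule.span R (SA.ZpHatSet P)

namespace BarSchurAlgebra

variable {SA : SchurAlgebra R Λ} {P : BlockCtx r g} {Sp : Subalgebra R SA.carrier}

instance (BA : BarSchurAlgebra SA P Sp) : Ring BA.B := BA.ringB
instance (BA : BarSchurAlgebra SA P Sp) : Algebra R BA.B := BA.algB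

/-- the two-sided ideal `(\bar S^p)^{∨λ}`, spanned by the `\barφ_{S,T}` of shape
strictly dominating `λ` -/
def BarVee (BA : BarSchurAlgebra SA P Sp) (lam : LamP Λ) : Submodule R BA.B :=
  Submodule.span R {y : BA.B | ∃ (lam' : LamP Λ) (S T : PTab P lam'),
    MultiComp.SDominates lam'.1 lam.1 ∧ y = BA.barphi lam' S T}

end BarSchurAlgebra

/-! ## Characterizations of the various Weyl modules -/

namespace SchurAlgebra

/-- `W` is the Weyl module `W^λ` of `S(Λ)`: its basis `{φ_T}` is indexed by
`T₀(λ)` and the right action is the one inherited from multiplication in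
`S(Λ)` modulo `S(Λ)^{∨λ}`. -/
def IsWeylModule (SA : SchurAlgebra R Λ) (lam : LamP Λ)
    (W : BasedRightModule R SA.carrier (TabOf Λ lam)) : Prop :=
  ∀ (S T : TabOf Λ lam) (a : SA.carrier),
    SA.bas ⟨lam, S.1, T.1, (S.2, T.2)⟩ * a -
        ∑ T' : TabOf Λ lam, (W.bas.repr (MulOpposite.op a • W.bas T) T') •
          SA.bas ⟨lam, S.1, T'.1, (S.2, T'.2)⟩ ∈ SA.SVee lam

/-- `f` is the canonical bilinear form of the Weyl module `W^λ`, determined by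
`φ_{T^λ,S} φ_{T,T^λ} ≡ ⟨φ_S, φ_T⟩ φ_{T^λ,T^λ} mod S(Λ)^{∨λ}`; here `tc` is the
canonical tableau `T^λ`. -/
def IsWeylForm (SA : SchurAlgebra R Λ) (lam : LamP Λ) (tc : TabOf Λ lam)
    (f : TabOf Λ lam → TabOf Λ lam → R) : Prop :=
  ∀ S T : TabOf Λ lam,
    SA.bas ⟨lam, tc.1, S.1, (tc.2, S.2)⟩ * SA.bas ⟨lam, T.1, tc.1, (T.2, tc.2)⟩ -
      f S T • SA.bas ⟨lam, tc.1, tc.1, (tc.2, tc.2)⟩ ∈ SA.SVee lam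

/-- `Z` is the standard right `S^p`-module `Z_p^ε` attached to `ε ∈ Σ^p`: its
basis `{φ_T^ε}` is indexed by `J^p(ε)` and the right `S^p`-action is inherited
from multiplication in `S^p` modulo `(S^p)^{∨ε}`. -/
def IsZpModule (SA : SchurAlgebra R Λ) (P : BlockCtx r g)
    (Sp : Subalgebra R SA.carrier) (e : SigmaPIdx Λ P)
    (Z : BasedRightModule R ↥Sp {x : TabOf Λ e.1.1 // x ∈ pJp P e}) : Prop :=
  ∀ (S : {x : TabOf Λ e.1.1 // x ∈ pIp P e})
    (T : {x : TabOf Λ e.1.1 // x ∈ pJp P e}) (a : ↥Sp),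
    SA.bas ⟨e.1.1, S.1.1, T.1.1, (S.1.2, T.1.2)⟩ * (a : SA.carrier) -
        ∑ T' : {x : TabOf Λ e.1.1 // x ∈ pJp P e},
          (Z.bas.repr (MulOpposite.op a • Z.bas T) T') •
            SA.bas ⟨e.1.1, S.1.1, T'.1.1, (S.1.2, T'.1.2)⟩ ∈ SA.SpVee P e

/-- `f` is the canonical bilinear pairing `β_ε` between `◇Z_p^ε` and `Z_p^ε`,
determined by `φ_{U,T} φ_{S,V} ≡ β_ε(φ_S^ε, φ_T^ε) φ_{U,V} mod (S^p)^{∨ε}`. -/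
def IsBetaForm (SA : SchurAlgebra R Λ) (P : BlockCtx r g) (e : SigmaPIdx Λ P)
    (f : {x : TabOf Λ e.1.1 // x ∈ pIp P e} →
      {x : TabOf Λ e.1.1 // x ∈ pJp P e} → R) : Prop :=
  ∀ (U : {x : TabOf Λ e.1.1 // x ∈ pIp P e})
    (T : {x : TabOf Λ e.1.1 // x ∈ pJp P e})
    (S : {x : TabOf Λ e.1.1 // x ∈ pIp P e})
    (V : {x : TabOf Λ e.1.1 // x ∈ pJp P e}),
    SA.bas ⟨e.1.1, U.1.1, T.1.1, (U.1.2, T.1.2)⟩ *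
        SA.bas ⟨e.1.1, S.1.1, V.1.1, (S.1.2, V.1.2)⟩ -
      f S T • SA.bas ⟨e.1.1, U.1.1, V.1.1, (U.1.2, V.1.2)⟩ ∈ SA.SpVee P e

/-- `N` is the radical `rad Z_p^ε` of the pairing `β_ε` (with Gram matrix `f`). -/
def IsBetaRadical (SA : SchurAlgebra R Λ) (P : BlockCtx r g)
    (Sp : Subalgebra R SA.carrier) (e : SigmaPIdx Λ P)
    (Z : BasedRightModule R ↥Sp {x : TabOf Λ e.1.1 // x ∈ pJp P e})
    (f : {x : TabOf Λ e.1.1 // x ∈ pIp P e} →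
      {x : TabOf Λ e.1.1 // x ∈ pJp P e} → R)
    (N : Submodule (↥Sp)ᵐᵒᵖ Z.M) : Prop :=
  ∀ y : Z.M, y ∈ N ↔ ∀ S : {x : TabOf Λ e.1.1 // x ∈ pIp P e},
    (∑ T : {x : TabOf Λ e.1.1 // x ∈ pJp P e}, Z.bas.repr y T * f S T) = 0

end SchurAlgebra

namespace BarSchurAlgebra

variable {SA : SchurAlgebra R Λ} {P : BlockCtx r g} {Sp : Subalgebra R SA.carrier}

/-- `Z` is the Weyl (cell) module `\bar Z_p^λ` of the cellular algebra `\bar S^p`: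
its basis `{\barφ_T}` is indexed by `T₀^p(λ)` and the right action is inherited
from multiplication in `\bar S^p` modulo `(\bar S^p)^{∨λ}`. -/
def IsBarWeyl (BA : BarSchurAlgebra SA P Sp) (lam : LamP Λ)
    (Z : BasedRightModule R BA.B (PTab P lam)) : Prop :=
  ∀ (S T : PTab P lam) (b : BA.B),
    BA.barphi lam S T * b - ∑ T' : PTab P lam,
        (Z.bas.repr (MulOpposite.op b • Z.bas T) T') • BA.barphi lam S T' ∈
      BA.BarVee lam

/-- `f` is the canonical symmetric bilinear form `⟨·,·⟩_p` on `\bar Z_p^λ`,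
determined by `\barφ_{T^λ,S} \barφ_{T,T^λ} ≡ ⟨\barφ_S, \barφ_T⟩_p \barφ_{T^λ,T^λ}
mod (\bar S^p)^{∨λ}`; `tc` is the canonical tableau `T^λ`. -/
def IsBarForm (BA : BarSchurAlgebra SA P Sp) (lam : LamP Λ) (tc : PTab P lam)
    (f : PTab P lam → PTab P lam → R) : Prop :=
  ∀ S T : PTab P lam,
    BA.barphi lam tc S * BA.barphi lam T tc - f S T • BA.barphi lam tc tc ∈
      BA.BarVee lam

end BarSchurAlgebra

end BarLayer
/-! ## The Ariki–Koike algebra -/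

/-- the defining relations of the Ariki–Koike algebra `H_{n,r}` on the generators
`T_0, T_1, …, T_{n-1}` (generator `i : Fin n` is `T_i`) -/
inductive ArikiKoikeRel (R : Type) [CommRing R] (n r : ℕ) (q : Rˣ) (Q : Fin r → R) :
    FreeAlgebra R (Fin n) → FreeAlgebra R (Fin n) → Prop
  | cyclotomic (h : 0 < n) :
      ArikiKoikeRel R n r q Q
        (((List.finRange r).map fun j =>
          FreeAlgebra.ι R (⟨0, h⟩ : Fin n) - algebraMap R _ (Q j)).prod) 0
  | quadratic (i : Fin n) (hi : i.1 ≠ 0) :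
      ArikiKoikeRel R n r q Q
        ((FreeAlgebra.ι R i - algebraMap R _ (q : R)) *
          (FreeAlgebra.ι R i + algebraMap R _ ((q⁻¹ : Rˣ) : R))) 0
  | braid0 (h : 1 < n) :
      ArikiKoikeRel R n r q Q
        (FreeAlgebra.ι R (⟨0, Nat.lt_of_lt_of_le Nat.zero_lt_one h.le⟩ : Fin n) *
          FreeAlgebra.ι R (⟨1, h⟩ : Fin n) *
          FreeAlgebra.ι R (⟨0, Nat.lt_of_lt_of_le Nat.zero_lt_one h.le⟩ : Fin n) *
          FreeAlgebra.ι R (⟨1, h⟩ : Fin n))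
        (FreeAlgebra.ι R (⟨1, h⟩ : Fin n) *
          FreeAlgebra.ι R (⟨0, Nat.lt_of_lt_of_le Nat.zero_lt_one h.le⟩ : Fin n) *
          FreeAlgebra.ι R (⟨1, h⟩ : Fin n) *
          FreeAlgebra.ι R (⟨0, Nat.lt_of_lt_of_le Nat.zero_lt_one h.le⟩ : Fin n))
  | braid (i j : Fin n) (hi : i.1 ≠ 0) (hij : j.1 = i.1 + 1) :
      ArikiKoikeRel R n r q Q
        (FreeAlgebra.ι R i * FreeAlgebra.ι R j * FreeAlgebra.ι R i)
        (FreeAlgebra.ι R j * FreeAlgebra.ι R i * FreeAlgebra.ι R j)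
  | comm (i j : Fin n) (hij : i.1 + 1 < j.1) :
      ArikiKoikeRel R n r q Q
        (FreeAlgebra.ι R i * FreeAlgebra.ι R j)
        (FreeAlgebra.ι R j * FreeAlgebra.ι R i)

/-- the Ariki–Koike algebra `H_{n,r}` over `R` with parameters
`q, Q_1, …, Q_r` (with `q` invertible) -/
abbrev ArikiKoike (R : Type) [CommRing R] (n r : ℕ) (q : Rˣ) (Q : Fin r → R) :=
  RingQuot (ArikiKoikeRel R n r q Q)

/-! ## Corners `e·B·e` at an idempotent -/

/-- an idempotent element of a ring -/
structure IdemElem (B : Type) [Ring B] where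
  e : B
  idem : e * e = e

/-- the corner `{x : B | e x e = x}` of `B` at the idempotent `e`;
for `e = \barφ_Ω` this is the modified Ariki–Koike algebra
`\bar H^p = \barφ_Ω ⬝ \bar S^p ⬝ \barφ_Ω` of type `p` -/
def Corner {B : Type} [Ring B] (E : IdemElem B) := {x : B // E.e * x * E.e = x}

namespace Corner

variable {B : Type} [Ring B] {E : IdemElem B}

instance : Add (Corner E) :=
  ⟨fun x y => ⟨x.1 + y.1, by rw [mul_add, add_mul, x.2, y.2]⟩⟩

instance : Mul (Corner E) :=
  ⟨fun x y => ⟨x.1 * y.1, by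
    have hx : E.e * x.1 = x.1 := by
      nth_rewrite 1 [← x.2]
      rw [← mul_assoc, ← mul_assoc, E.idem, x.2]
    have hy : y.1 * E.e = y.1 := by
      nth_rewrite 1 [← y.2]
      rw [mul_assoc, E.idem, y.2]
    rw [← mul_assoc, hx, mul_assoc, hy]⟩⟩

instance : Zero (Corner E) := ⟨⟨0, by simp⟩⟩

instance : Neg (Corner E) := ⟨fun x => ⟨-x.1, by rw [mul_neg, neg_mul, x.2]⟩⟩

/-- the identity element `e` of the corner -/
def one (E : IdemElem B) : Corner E :=
  ⟨E.e, by rw [E.idem, E.idem]⟩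

instance {R : Type} [CommRing R] [Algebra R B] : SMul R (Corner E) :=
  ⟨fun c x => ⟨c • x.1, by rw [mul_smul_comm, smul_mul_assoc, x.2]⟩⟩

@[simp] theorem add_val (x y : Corner E) : (x + y).1 = x.1 + y.1 := rfl
@[simp] theorem mul_val (x y : Corner E) : (x * y).1 = x.1 * y.1 := rfl
@[simp] theorem smul_val {R : Type} [CommRing R] [Algebra R B] (c : R)
    (x : Corner E) : (c • x).1 = c • x.1 := rfl

end Corner

/-! ## The set `Ω` and the blocks of compositions of `n` -/

section OmegaLayer

variable {n r g : ℕ} {m : Fin r → ℕ}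

/-- `ω ∈ Ω`: all the entries of `ω` are `0` or `1`, for each letter
`1 ≤ i ≤ n` the `i`-th rows of the components of `ω` have total size `1`,
and all nonzero rows occur in components which are last in their `p`-block
(this uses `m_k ≥ n` for all `k`). -/
def IsOmega (P : BlockCtx r g) (hm : ∀ k, n ≤ m k) (om : MultiComp n r m) : Prop :=
  (∀ (k : Fin r) (i : Fin (m k)), om.part k i ≤ 1) ∧
  (∀ i : Fin n,
    (∑ k : Fin r, om.part k ⟨i.1, Nat.lt_of_lt_of_le i.2 (hm k)⟩) = 1) ∧
  (∀ (k : Fin r) (i : Fin (m k)), om.part k i = 1 →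
    ∀ k' : Fin r, P.π k' = P.π k → k' ≤ k)

instance (P : BlockCtx r g) (hm : ∀ k, n ≤ m k) (om : MultiComp n r m) :
    Decidable (IsOmega P hm om) := by
  unfold IsOmega; infer_instance

/-- the set `D_{n,g}` of tuples `(n₁, …, n_g)` of non-negative integers summing
to `n` -/
def DComp (n g : ℕ) := {f : Fin g → ℕ // ∑ b, f b = n}

end OmegaLayer

/-!
For a row tableau `S` of shape `λ`, the map `φ_T ↦ φ_{S,T}` from `W^λ` to `S(Λ)` stays injective
modulo the span of any set of cellular basis elements missing the row `(λ, S, ·)`. `S(Λ)^{∨λ}` is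
spanned by basis elements of shape `⊳ λ`, and so is `(S^p)^{∨ε}` apart from the generators
`φ_{U,V}`, `U ∈ I^p(λ,1)`, that appear when `ε = (λ,0)`; these have `a_p` of the type of `U`
strictly below `a_p(λ)`. Hence every row `S ∈ I^p(ε)` is missed by both ideals, and comparing the
congruences for `φ_{S,T}·a` that define `Z_p^ε` and `W^λ` shows that `φ_T^ε ↦ φ_T` is
`S^p`-linear. For `ε = (λ,1)` such rows exist because `(λ,1) ∈ Σ^p` and the map is a bijection of
bases; for `ε = (λ,0)` take `S = T ∈ T₀^p(λ)`. Part (i) is the composite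
`Z_p^{(λ,0)} → W^λ ≅ Z_p^{(λ,1)}`.
-/

namespace Module.Basis

variable {R ι κ M N : Type*} [Ring R] [AddCommGroup M] [Module R M]
  [AddCommGroup N] [Module R N] (b : Basis ι R M) (c : Basis κ R N)
  {f : N →ₗ[R] M} {j : κ → ι}

theorem repr_map_apply_of_map_basis (hj : Function.Injective j)
    (hf : ∀ k, f (c k) = b (j k)) (x : N) (k : κ) :
    b.repr (f x) (j k) = c.repr x k := by
  have h : Finsupp.lapply (j k) ∘ₗ b.repr.toLinearMap ∘ₗ f =
      Finsupp.lapply k ∘ₗ c.repr.toLinearMap :=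
    c.ext fun k' => by simp [hf, Finsupp.single_apply_left hj]
  exact LinearMap.congr_fun h x

theorem eq_zero_of_map_mem_span_image (hj : Function.Injective j)
    (hf : ∀ k, f (c k) = b (j k)) {K : Set ι} (hK : ∀ k, j k ∉ K) {x : N}
    (hx : f x ∈ Submodule.span R (b '' K)) : x = 0 := by
  refine c.repr.injective (Finsupp.ext fun k => ?_)
  rw [← repr_map_apply_of_map_basis b c hj hf, map_zero, Finsupp.zero_apply]
  by_contra hk
  exact hK k (b.mem_span_image.1 hx (Finsupp.mem_support_iff.2 hk))

theorem injective_of_map_basis (hj : Function.Injective j)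
    (hf : ∀ k, f (c k) = b (j k)) : Function.Injective f := by
  refine (injective_iff_map_eq_zero f).2 fun x hx => ?_
  refine eq_zero_of_map_mem_span_image b c hj hf (K := ∅) (fun _ => id) ?_
  rw [hx]
  exact zero_mem _

end Module.Basis

namespace BasedRightModule

variable {R : Type} [CommRing R] {A : Type} [Ring A] [Algebra R A] {ι : Type}

instance (X : BasedRightModule R A ι) : SMulCommClass R Aᵐᵒᵖ X.M :=
  IsScalarTower.to_smulCommClass

instance (X : BasedRightModule R A ι) : SMulCommClass Aᵐᵒᵖ R X.M :=
  SMulCommClass.symm _ _ _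

theorem map_smul_of_map_smul_bas {B κ : Type} [Ring B] [Algebra R B]
    {X : BasedRightModule R A ι} {Y : BasedRightModule R B κ} (ρ : A → B)
    (f : X.M →ₗ[R] Y.M) (a : A)
    (h : ∀ i, f (op a • X.bas i) = op (ρ a) • f (X.bas i)) (x : X.M) :
    f (op a • x) = op (ρ a) • f x :=
  LinearMap.congr_fun
    (X.bas.ext (f₁ := f ∘ₗ DistribSMul.toLinearMap R X.M (op a))
      (f₂ := DistribSMul.toLinearMap R Y.M (op (ρ a)) ∘ₗ f) h) x

end BasedRightModule

namespace SchurAlgebra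

variable {R : Type} [CommRing R] {n r g : ℕ} {m : Fin r → ℕ}
  {Λ : Finset (MultiComp n r m)} (SA : SchurAlgebra R Λ) {lam : LamP Λ}

theorem djmIndex_row_injective (S : TabOf Λ lam) :
    Function.Injective fun T : TabOf Λ lam => (⟨lam, S.1, T.1, (S.2, T.2)⟩ : DJMIndex Λ) := by
  rintro ⟨nu, t⟩ ⟨nu', t'⟩ h
  simp only [Sigma.mk.inj_iff, heq_eq_eq, true_and] at h
  obtain ⟨rfl, ht⟩ := h
  simp only [heq_eq_eq, Prod.mk.injEq, true_and] at ht
  rw [ht]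

/-- `φ_T ↦ φ_{S,T}`: the row of the cellular basis with first tableau `S`. -/
def rowMap {M : Type} [AddCommGroup M] [Module R M] (b : Module.Basis (TabOf Λ lam) R M)
    (S : TabOf Λ lam) : M →ₗ[R] SA.carrier :=
  b.constr R fun T => SA.bas ⟨lam, S.1, T.1, (S.2, T.2)⟩

variable {M N κ : Type} [AddCommGroup M] [Module R M] [AddCommGroup N] [Module R N]
  [Fintype κ] (b : Module.Basis (TabOf Λ lam) R M) (S : TabOf Λ lam)

theorem rowMap_map_of_map_basis (c : Module.Basis κ R N) (j : κ → TabOf Λ lam)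
    {f : N →ₗ[R] M} (hf : ∀ k, f (c k) = b (j k)) (y : N) :
    SA.rowMap b S (f y) = ∑ k, c.repr y k • SA.bas ⟨lam, S.1, (j k).1, (S.2, (j k).2)⟩ := by
  have h : SA.rowMap b S ∘ₗ f =
      c.constr R fun k => SA.bas ⟨lam, S.1, (j k).1, (S.2, (j k).2)⟩ :=
    c.ext fun k => by simp only [LinearMap.comp_apply, hf, rowMap, Module.Basis.constr_basis]
  rw [← LinearMap.comp_apply, h, Module.Basis.constr_apply_fintype]
  rfl

theorem eq_zero_of_rowMap_mem_span {K : Set (DJMIndex Λ)}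
    (hK : ∀ T : TabOf Λ lam, ⟨lam, S.1, T.1, (S.2, T.2)⟩ ∉ K) {x : M}
    (hx : SA.rowMap b S x ∈ Submodule.span R (SA.bas '' K)) : x = 0 :=
  SA.bas.eq_zero_of_map_mem_span_image b (djmIndex_row_injective S)
    (fun T => b.constr_basis R _ T) hK hx

theorem IsWeylModule.sub_rowMap_mem {W : BasedRightModule R SA.carrier (TabOf Λ lam)}
    (hW : SA.IsWeylModule lam W) (S T : TabOf Λ lam) (a : SA.carrier) :
    SA.bas ⟨lam, S.1, T.1, (S.2, T.2)⟩ * a - SA.rowMap W.bas S (op a • W.bas T) ∈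
      SA.SVee lam := by
  have h := SA.rowMap_map_of_map_basis W.bas S W.bas id (f := LinearMap.id) (fun _ => rfl)
  simpa only [LinearMap.id_apply, id] using h (op a • W.bas T) ▸ hW S T a

/-- The cellular basis elements that may occur in `(S^p)^{∨ε}`. -/
def spVeeSupport (P : BlockCtx r g) (e : SigmaPIdx Λ P) : Set (DJMIndex Λ) :=
  {i | MultiComp.SDominates i.1.1 e.1.1.1 ∨
    (e.1.2 = false ∧ vecLT (P.aP i.2.1.1) (P.aP e.1.1.1))}

theorem SVee_le_span_spVeeSupport (P : BlockCtx r g) (e : SigmaPIdx Λ P) :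
    SA.SVee e.1.1 ≤ Submodule.span R (SA.bas '' spVeeSupport P e) := by
  rw [SVee, Submodule.span_le]
  rintro _ ⟨lam', mu', nu', S', T', hdom, rfl⟩
  exact Submodule.subset_span ⟨⟨lam', mu', nu', (S', T')⟩, Or.inl hdom, rfl⟩

theorem SpVee_le_span_spVeeSupport (P : BlockCtx r g) (e : SigmaPIdx Λ P) :
    SA.SpVee P e ≤ Submodule.span R (SA.bas '' spVeeSupport P e) := by
  rw [SpVee, Submodule.span_le]
  rintro _ ⟨_, ⟨⟨e', he'⟩, rfl⟩, S, hS, T, -, rfl⟩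
  refine Submodule.subset_span ⟨_, ?_, rfl⟩
  rcases he' with hdom | ⟨hlam, he', he⟩
  · exact Or.inl hdom
  · rcases hS with ⟨-, hlt⟩ | ⟨hf, -⟩
    · exact Or.inr ⟨he, congrArg (fun l : LamP Λ => P.aP l.1) hlam ▸ hlt⟩
    · exact absurd (hf.symm.trans he') Bool.false_ne_true

theorem row_not_mem_spVeeSupport {P : BlockCtx r g} {e : SigmaPIdx Λ P}
    (S : {x : TabOf Λ e.1.1 // x ∈ pIp P e}) (T : TabOf Λ e.1.1) :
    (⟨e.1.1, S.1.1, T.1, (S.1.2, T.2)⟩ : DJMIndex Λ) ∉ spVeeSupport P e := by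
  rintro (hdom | ⟨he, hlt⟩)
  · exact hdom.2 rfl
  · rcases S.2 with ⟨he', -⟩ | ⟨-, hpCond⟩
    · exact Bool.false_ne_true (he.symm.trans he')
    · exact hlt.2 hpCond

variable {P : BlockCtx r g} {Sp : Subalgebra R SA.carrier} {e : SigmaPIdx Λ P}
  {Z : BasedRightModule R ↥Sp {x : TabOf Λ e.1.1 // x ∈ pJp P e}}
  {W : BasedRightModule R SA.carrier (TabOf Λ e.1.1)} {f : Z.M →ₗ[R] W.M}

theorem IsZpModule.map_smul_bas (hZ : SA.IsZpModule P Sp e Z) (hW : SA.IsWeylModule e.1.1 W)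
    (hf : ∀ T, f (Z.bas T) = W.bas T.1) (S : {x : TabOf Λ e.1.1 // x ∈ pIp P e})
    (T : {x : TabOf Λ e.1.1 // x ∈ pJp P e}) (a : ↥Sp) :
    f (op a • Z.bas T) = op (a : SA.carrier) • W.bas T.1 := by
  have hrel := sub_mem (SA.SVee_le_span_spVeeSupport P e (hW.sub_rowMap_mem SA S.1 T.1 a))
    (SA.SpVee_le_span_spVeeSupport P e (hZ S T a))
  rw [sub_sub_sub_cancel_left, ← SA.rowMap_map_of_map_basis W.bas S.1 Z.bas Subtype.val hf,
    ← map_sub] at hrel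
  exact sub_eq_zero.1 (SA.eq_zero_of_rowMap_mem_span W.bas S.1 (row_not_mem_spVeeSupport S) hrel)

theorem IsZpModule.map_smul (hZ : SA.IsZpModule P Sp e Z) (hW : SA.IsWeylModule e.1.1 W)
    (hf : ∀ T, f (Z.bas T) = W.bas T.1)
    (row : {x : TabOf Λ e.1.1 // x ∈ pJp P e} → {x : TabOf Λ e.1.1 // x ∈ pIp P e})
    (a : ↥Sp) (x : Z.M) :
    f (op a • x) = op (a : SA.carrier) • f x :=
  BasedRightModule.map_smul_of_map_smul_bas Subtype.val f a
    (fun T => by rw [hf, hZ.map_smul_bas SA hW hf (row T)]) x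

end SchurAlgebra

theorem Zp0_into_Zp1_iso_Weyl_general
    {R : Type} [CommRing R] {n r g : ℕ} {m : Fin r → ℕ}
    {Λ : Finset (MultiComp n r m)}
    (SA : SchurAlgebra R Λ) (P : BlockCtx r g)
    (Sp : Subalgebra R SA.carrier)
    (lam : LamP Λ)
    -- `(λ,1) ∈ Σ^p`
    (h1 : ∃ mu : LamS Λ, vecLT (P.aP mu.1) (P.aP lam.1) ∧
      Nonempty (SSTab lam.1 mu.1))
    -- the standard modules `Z_p^{(λ,0)}` and `Z_p^{(λ,1)}` of `S^p`
    (Z0 : BasedRightModule R ↥Sp {x : TabOf Λ lam // x ∈ pJp P (eZero P lam)})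
    (hZ0 : SA.IsZpModule P Sp (eZero P lam) Z0)
    (Z1 : BasedRightModule R ↥Sp
      {x : TabOf Λ lam // x ∈ pJp P (⟨(lam, true), fun _ => h1⟩ : SigmaPIdx Λ P)})
    (hZ1 : SA.IsZpModule P Sp (⟨(lam, true), fun _ => h1⟩ : SigmaPIdx Λ P) Z1)
    -- the Weyl module `W^λ` of `S(Λ)`
    (W : BasedRightModule R SA.carrier (TabOf Λ lam))
    (hW : SA.IsWeylModule lam W) :
    -- (i)
    (∃ F : Z0.M →ₗ[R] Z1.M, Function.Injective F ∧
      (∀ T : {x : TabOf Λ lam // x ∈ pJp P (eZero P lam)},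
        F (Z0.bas T) = Z1.bas ⟨T.1, Or.inl rfl⟩) ∧
      ∀ (a : ↥Sp) (x : Z0.M),
        F (MulOpposite.op a • x) = MulOpposite.op a • F x) ∧
    -- (ii)
    (∃ G : Z1.M ≃ₗ[R] W.M,
      (∀ T : {x : TabOf Λ lam //
          x ∈ pJp P (⟨(lam, true), fun _ => h1⟩ : SigmaPIdx Λ P)},
        G (Z1.bas T) = W.bas T.1) ∧
      ∀ (a : ↥Sp) (x : Z1.M),
        G (MulOpposite.op a • x) = MulOpposite.op (a : SA.carrier) • G x) := by
  obtain ⟨mu, hmu, ⟨S⟩⟩ := id h1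
  let G : Z1.M ≃ₗ[R] W.M := Z1.bas.equiv W.bas (Equiv.subtypeUnivEquiv fun _ => Or.inl rfl)
  have hG (T) : G (Z1.bas T) = W.bas T.1 := Z1.bas.equiv_apply T W.bas _
  have hG_smul : ∀ (a : ↥Sp) x, G (op a • x) = op (a : SA.carrier) • G x :=
    hZ1.map_smul SA hW hG fun _ => ⟨⟨mu, S⟩, Or.inl ⟨rfl, hmu⟩⟩
  let F : Z0.M →ₗ[R] W.M := Z0.bas.constr R fun T => W.bas T.1
  have hF (T) : F (Z0.bas T) = W.bas T.1 := Z0.bas.constr_basis R _ T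
  have hF_smul := hZ0.map_smul SA hW hF fun T =>
    ⟨T.1, Or.inr ⟨rfl, T.2.resolve_left Bool.false_ne_true⟩⟩
  refine ⟨⟨G.symm.toLinearMap ∘ₗ F, ?_, fun T => ?_, fun a x => ?_⟩, G, hG, hG_smul⟩
  · exact G.symm.injective.comp
      (W.bas.injective_of_map_basis Z0.bas Subtype.val_injective hF)
  · rw [LinearMap.comp_apply, hF, LinearEquiv.coe_coe, G.symm_apply_eq, hG]
  · apply G.injective
    simp only [LinearMap.comp_apply, LinearEquiv.coe_coe, LinearEquiv.apply_symm_apply,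
      hF_smul, hG_smul]

theorem Zp0_into_Zp1_iso_Weyl
    {R : Type} [CommRing R] [IsDomain R] {n r g : ℕ} {m : Fin r → ℕ}
    (hn : 0 < n) (hr : 0 < r) (hm : ∀ k, 0 < m k)
    {Λ : Finset (MultiComp n r m)} (hΛ : Saturated Λ)
    (SA : SchurAlgebra R Λ) (P : BlockCtx r g)
    (Sp : Subalgebra R SA.carrier)
    (hSp : (Sp : Set SA.carrier) =
      (Submodule.span R (SA.ZpSet P) : Submodule R SA.carrier))
    (lam : LamP Λ)
    -- `(λ,1) ∈ Σ^p`
    (h1 : ∃ mu : LamS Λ, vecLT (P.aP mu.1) (P.aP lam.1) ∧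
      Nonempty (SSTab lam.1 mu.1))
    -- the standard modules `Z_p^{(λ,0)}` and `Z_p^{(λ,1)}` of `S^p`
    (Z0 : BasedRightModule R ↥Sp {x : TabOf Λ lam // x ∈ pJp P (eZero P lam)})
    (hZ0 : SA.IsZpModule P Sp (eZero P lam) Z0)
    (Z1 : BasedRightModule R ↥Sp
      {x : TabOf Λ lam // x ∈ pJp P (⟨(lam, true), fun _ => h1⟩ : SigmaPIdx Λ P)})
    (hZ1 : SA.IsZpModule P Sp (⟨(lam, true), fun _ => h1⟩ : SigmaPIdx Λ P) Z1)
    -- the Weyl module `W^λ` of `S(Λ)`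
    (W : BasedRightModule R SA.carrier (TabOf Λ lam))
    (hW : SA.IsWeylModule lam W) :
    -- (i)
    (∃ F : Z0.M →ₗ[R] Z1.M, Function.Injective F ∧
      (∀ T : {x : TabOf Λ lam // x ∈ pJp P (eZero P lam)},
        F (Z0.bas T) = Z1.bas ⟨T.1, Or.inl rfl⟩) ∧
      ∀ (a : ↥Sp) (x : Z0.M),
        F (MulOpposite.op a • x) = MulOpposite.op a • F x) ∧
    -- (ii)
    (∃ G : Z1.M ≃ₗ[R] W.M,
      (∀ T : {x : TabOf Λ lam //
          x ∈ pJp P (⟨(lam, true), fun _ => h1⟩ : SigmaPIdx Λ P)},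
        G (Z1.bas T) = W.bas T.1) ∧
      ∀ (a : ↥Sp) (x : Z1.M),
        G (MulOpposite.op a • x) = MulOpposite.op (a : SA.carrier) • G x) :=
  Zp0_into_Zp1_iso_Weyl_general SA P Sp lam h1 Z0 hZ0 Z1 hZ1 W hW
end
end

section
/- Let λ ∈ Λ^+ and regard Z_p^{(λ,0)} as an S^p-submodule of the Weyl module W^λ via the injection φ_T^{(λ,0)} ↦ φ_T (T ∈ T_0^p(λ)). (i) If M is an S^p-submodule of Z_p^{(λ,0)} and tildeM is the S(Λ)-submodule of W^λ generated by M, then tildeM ∩ Z_p^{(λ,0)} = M. (ii) If M_1 ⊊ M_2 are S^p-submodules of Z_p^{(λ,0)}, with inclusion maps ι_i : M_i → Z_p^{(λ,0)}, then the images of the induced maps ι_i ⊗ Id : M_i ⊗_{S^p} S(Λ) → Z_p^{(λ,0)} ⊗_{S^p} S(Λ) satisfy Im(ι_1 ⊗ Id) ⊊ Im(ι_2 ⊗ Id). -/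
/-!
Common framework for the formalization of results of Shoji–Wada,
"Cyclotomic q-Schur algebras associated to the Ariki-Koike algebra".
-/

open scoped BigOperators TensorProduct
open MulOpposite

noncomputable section

/-!
Let `e = ∑ φ_μ`, summed over the `μ ∈ Λ` with `a_p(μ) = a_p(λ)`. It acts as the identity on
`Z_p^{(λ,0)} ⊆ W^λ`, and its corner `e S(Λ) e` lies in `S^p`, since `a_p(μ) = a_p(ν)` forces
`α_p(μ) = α_p(ν)`. So for `w = ∑ mᵢ aᵢ` in the `S(Λ)`-span of `M` we get
`w e = ∑ mᵢ (e aᵢ e) ∈ M`, while `w e = w` for `w ∈ Z_p^{(λ,0)}`; this is (i). By (i) the map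
`M ↦ \tilde M` is injective, hence strictly monotone, which is (ii).
-/

namespace BlockCtx

variable {n r g : ℕ} {m : Fin r → ℕ} (P : BlockCtx r g)

theorem aP_add_alphaP (mu : MultiComp n r m) (b : Fin g) :
    P.aP mu b + P.alphaP mu b =
      ∑ k ∈ Finset.univ.filter (fun k => P.π k ≤ b), mu.compSize k := by
  rw [aP, alphaP, ← Finset.sum_union (Finset.disjoint_filter.2 fun _ _ h => h.ne),
    ← Finset.filter_or]
  simp_rw [← le_iff_lt_or_eq]

theorem alphaP_eq_of_aP_eq {mu nu : MultiComp n r m} (h : P.aP mu = P.aP nu) :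
    P.alphaP mu = P.alphaP nu := by
  funext b
  suffices hle : ∑ k ∈ Finset.univ.filter (fun k => P.π k ≤ b), mu.compSize k =
      ∑ k ∈ Finset.univ.filter (fun k => P.π k ≤ b), nu.compSize k by
    have := P.aP_add_alphaP mu b
    have := P.aP_add_alphaP nu b
    have := congrFun h b
    omega
  -- the blocks `≤ b` carry `a_p(μ)_{b+1}` boxes, or all `n` of them if `b` is the last block
  by_cases hb : b.1 + 1 < g
  · have hlt : ∀ k, P.π k ≤ b ↔ P.π k < ⟨b.1 + 1, hb⟩ := fun k => by
      show (P.π k).1 ≤ b.1 ↔ (P.π k).1 < b.1 + 1; omega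
    simp only [hlt]
    exact congrFun h ⟨b.1 + 1, hb⟩
  · have hall : ∀ k, P.π k ≤ b := fun k => by
      rw [Fin.le_def]; omega
    simp only [hall, Finset.filter_true]
    exact mu.sum_eq.trans nu.sum_eq.symm

end BlockCtx

section Corner

variable {A B X Z F : Type*} [Ring A] [Ring B] [AddCommGroup X] [Module Aᵐᵒᵖ X]
  [AddCommGroup Z] [Module Bᵐᵒᵖ Z] [FunLike F Z X] [AddMonoidHomClass F Z X]
  {f : B →+* A} {ι : F} {e : A}

theorem op_smul_mem_image_of_mem_span (hfix : ∀ z, op e • ι z = ι z)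
    (hcorner : ∀ a, e * a * e ∈ Set.range f)
    (hequiv : ∀ b z, ι (op b • z) = op (f b) • ι z) (M : Submodule Bᵐᵒᵖ Z) {w : X}
    (hw : w ∈ Submodule.span Aᵐᵒᵖ (ι '' M)) : op e • w ∈ ι '' M := by
  suffices h : ∀ a : Aᵐᵒᵖ, op e • a • w ∈ ι '' M by simpa using h 1
  induction hw using Submodule.span_induction with
  | mem w hw =>
    obtain ⟨z, hz, rfl⟩ := hw
    intro a
    obtain ⟨b, hb⟩ := hcorner a.unop
    refine ⟨op b • z, M.smul_mem _ hz, ?_⟩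
    conv_rhs => rw [← hfix z, smul_smul, smul_smul, ← op_unop a, ← op_mul, ← op_mul]
    rw [hequiv, hb, mul_assoc]
  | zero => exact fun _ => ⟨0, M.zero_mem, by simp⟩
  | add w₁ w₂ _ _ ih₁ ih₂ =>
    intro a
    obtain ⟨z₁, hz₁, h₁⟩ := ih₁ a
    obtain ⟨z₂, hz₂, h₂⟩ := ih₂ a
    exact ⟨z₁ + z₂, M.add_mem hz₁ hz₂, by rw [map_add, h₁, h₂, smul_add, smul_add]⟩
  | smul c w _ ih => exact fun a => by simpa only [smul_smul] using ih (a * c)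

variable (hfix : ∀ z, op e • ι z = ι z) (hcorner : ∀ a, e * a * e ∈ Set.range f)
  (hequiv : ∀ b z, ι (op b • z) = op (f b) • ι z)
include hfix hcorner hequiv

theorem apply_mem_span_image_iff (hι : Function.Injective ι) (M : Submodule Bᵐᵒᵖ Z)
    (z : Z) : ι z ∈ Submodule.span Aᵐᵒᵖ (ι '' M) ↔ z ∈ M := by
  refine ⟨fun hz => ?_, fun hz => Submodule.subset_span ⟨z, hz, rfl⟩⟩
  obtain ⟨z', hz', h⟩ := op_smul_mem_image_of_mem_span hfix hcorner hequiv M hz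
  rw [hfix] at h
  rwa [← hι h]

theorem strictMono_span_image (hι : Function.Injective ι) :
    StrictMono fun M : Submodule Bᵐᵒᵖ Z => Submodule.span Aᵐᵒᵖ (ι '' M) := by
  refine Monotone.strictMono_of_injective
    (fun _ _ h => Submodule.span_mono (Set.image_mono h)) fun M₁ M₂ h => ?_
  ext z
  rw [← apply_mem_span_image_iff hfix hcorner hequiv hι, h,
    apply_mem_span_image_iff hfix hcorner hequiv hι]

end Corner

namespace SchurAlgebra

variable {R : Type} [CommRing R] {n r g : ℕ} {m : Fin r → ℕ} {Λ : Finset (MultiComp n r m)}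
  (SA : SchurAlgebra R Λ) (P : BlockCtx r g)

def phiAP (c : Fin g → ℕ) : SA.carrier :=
  ∑ mu ∈ Finset.univ.filter (fun mu : LamS Λ => P.aP mu.1 = c), SA.phiId mu

theorem bas_mul_phiAP (c : Fin g → ℕ) (lam : LamP Λ) (mu nu : LamS Λ)
    (S : SSTab lam.1 mu.1) (T : SSTab lam.1 nu.1) :
    SA.bas ⟨lam, mu, nu, (S, T)⟩ * SA.phiAP P c =
      if P.aP nu.1 = c then SA.bas ⟨lam, mu, nu, (S, T)⟩ else 0 := by
  simp [phiAP, Finset.mul_sum, SA.bas_mul_phiId]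

theorem phiAP_mul_bas (c : Fin g → ℕ) (lam : LamP Λ) (mu nu : LamS Λ)
    (S : SSTab lam.1 mu.1) (T : SSTab lam.1 nu.1) :
    SA.phiAP P c * SA.bas ⟨lam, mu, nu, (S, T)⟩ =
      if P.aP mu.1 = c then SA.bas ⟨lam, mu, nu, (S, T)⟩ else 0 := by
  simp [phiAP, Finset.sum_mul, SA.phiId_mul_bas]

theorem phiAP_mul_mul_phiAP_mem_span (c : Fin g → ℕ) (a : SA.carrier) :
    SA.phiAP P c * a * SA.phiAP P c ∈ Submodule.span R (SA.ZpSet P) := by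
  have hbas : ∀ i, SA.phiAP P c * SA.bas i * SA.phiAP P c ∈ Submodule.span R (SA.ZpSet P) := by
    rintro ⟨lam, mu, nu, S, T⟩
    rw [phiAP_mul_bas]
    split_ifs with hmu
    · rw [bas_mul_phiAP]
      split_ifs with hnu
      · exact Submodule.subset_span ⟨lam, mu, nu, S, T,
          fun hne => absurd (P.alphaP_eq_of_aP_eq (hmu.trans hnu.symm)) hne, rfl⟩
      · exact Submodule.zero_mem _
    · rw [zero_mul]
      exact Submodule.zero_mem _
  rw [← SA.bas.sum_repr a, Finset.mul_sum, Finset.sum_mul]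
  refine Submodule.sum_mem _ fun i _ => ?_
  rw [mul_smul_comm, smul_mul_assoc]
  exact Submodule.smul_mem _ _ (hbas i)

variable {SA} in
theorem repr_eq_zero_of_mem_SVee {lam : LamP Λ} {x : SA.carrier} (hx : x ∈ SA.SVee lam)
    {i : DJMIndex Λ} (hi : ¬ MultiComp.SDominates i.1.1 lam.1) : SA.bas.repr x i = 0 := by
  induction hx using Submodule.span_induction with
  | mem x hx =>
    obtain ⟨lam', mu', nu', S', T', hdom, rfl⟩ := hx
    rw [Module.Basis.repr_self, Finsupp.single_apply, if_neg]
    rintro rfl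
    exact hi hdom
  | zero => simp
  | add x y _ _ hx hy => simp [hx, hy]
  | smul c x _ hx => simp [hx]

end SchurAlgebra

theorem DJMIndex.right_inj {n r : ℕ} {m : Fin r → ℕ} {Λ : Finset (MultiComp n r m)}
    {lam : LamP Λ} (S : TabOf Λ lam) {T T' : TabOf Λ lam} :
    (⟨lam, S.1, T.1, (S.2, T.2)⟩ : DJMIndex Λ) = ⟨lam, S.1, T'.1, (S.2, T'.2)⟩ ↔ T = T' := by
  refine ⟨fun h => ?_, fun h => h ▸ rfl⟩
  obtain ⟨nu, T⟩ := T
  obtain ⟨nu', T'⟩ := T'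
  simp only [Sigma.mk.inj_iff, heq_eq_eq, true_and] at h
  obtain ⟨rfl, h⟩ := h
  simp_all

namespace SchurAlgebra.IsWeylModule

variable {R : Type} [CommRing R] {n r g : ℕ} {m : Fin r → ℕ} {Λ : Finset (MultiComp n r m)}
  {SA : SchurAlgebra R Λ} {lam : LamP Λ} {W : BasedRightModule R SA.carrier (TabOf Λ lam)}

theorem repr_smul_bas (hW : SA.IsWeylModule lam W) (S T T' : TabOf Λ lam) (a : SA.carrier) :
    W.bas.repr (op a • W.bas T) T' =
      SA.bas.repr (SA.bas ⟨lam, S.1, T.1, (S.2, T.2)⟩ * a) ⟨lam, S.1, T'.1, (S.2, T'.2)⟩ := by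
  have h := repr_eq_zero_of_mem_SVee (hW S T a) (i := ⟨lam, S.1, T'.1, (S.2, T'.2)⟩)
    fun h => h.2 rfl
  rw [map_sub, Finsupp.sub_apply, sub_eq_zero] at h
  rw [h]
  simp [Finsupp.single_apply, DJMIndex.right_inj S]

theorem phiAP_smul_bas (hW : SA.IsWeylModule lam W) (P : BlockCtx r g) {c : Fin g → ℕ}
    {T : TabOf Λ lam} (hT : P.aP T.1.1 = c) : op (SA.phiAP P c) • W.bas T = W.bas T := by
  refine W.bas.repr.injective (Finsupp.ext fun T' => ?_)
  rw [hW.repr_smul_bas T, SA.bas_mul_phiAP, if_pos hT]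
  simp [Finsupp.single_apply, DJMIndex.right_inj T]

end SchurAlgebra.IsWeylModule

theorem submodule_intersection_and_strictness_general
    {R : Type} [CommRing R] {n r g : ℕ} {m : Fin r → ℕ}
    {Λ : Finset (MultiComp n r m)}
    (SA : SchurAlgebra R Λ) (P : BlockCtx r g)
    (Sp : Subalgebra R SA.carrier)
    (hSp : (Sp : Set SA.carrier) =
      (Submodule.span R (SA.ZpSet P) : Submodule R SA.carrier))
    (lam : LamP Λ)
    (Z0 : BasedRightModule R ↥Sp {x : TabOf Λ lam // x ∈ pJp P (eZero P lam)})
    (W : BasedRightModule R SA.carrier (TabOf Λ lam))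
    (hW : SA.IsWeylModule lam W)
    -- the injection `ι : Z_p^{(λ,0)} → W^λ`, `φ_T^{(λ,0)} ↦ φ_T`
    (iota : Z0.M →ₗ[R] W.M)
    (hiota_bas : ∀ T : {x : TabOf Λ lam // x ∈ pJp P (eZero P lam)},
      iota (Z0.bas T) = W.bas T.1)
    (hiota_inj : Function.Injective iota)
    (hiota_equiv : ∀ (a : ↥Sp) (z : Z0.M),
      iota (MulOpposite.op a • z) = MulOpposite.op (a : SA.carrier) • iota z) :
    -- (i)
    (∀ M0 : Submodule (↥Sp)ᵐᵒᵖ Z0.M, ∀ x : Z0.M,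
      iota x ∈ Submodule.span SA.carrierᵐᵒᵖ (iota '' (M0 : Set Z0.M)) ↔
        x ∈ M0) ∧
    -- (ii)
    (∀ M1 M2 : Submodule (↥Sp)ᵐᵒᵖ Z0.M, M1 < M2 →
      Submodule.span SA.carrierᵐᵒᵖ (iota '' (M1 : Set Z0.M)) <
        Submodule.span SA.carrierᵐᵒᵖ (iota '' (M2 : Set Z0.M))) := by
  set e := SA.phiAP P (P.aP lam.1)
  have hfix : ∀ z, op e • iota z = iota z := by
    have h : (DistribSMul.toLinearMap R W.M (op e)).comp iota = iota :=
      Z0.bas.ext fun T => by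
        rw [LinearMap.comp_apply, hiota_bas]
        exact hW.phiAP_smul_bas P (T.2.resolve_left Bool.false_ne_true)
    exact LinearMap.congr_fun h
  have hcorner : ∀ a, e * a * e ∈ Set.range Sp.val.toRingHom := fun a => by
    have h : e * a * e ∈ (Sp : Set SA.carrier) :=
      hSp ▸ SA.phiAP_mul_mul_phiAP_mem_span P _ a
    exact ⟨⟨_, h⟩, rfl⟩
  exact ⟨apply_mem_span_image_iff hfix hcorner hiota_equiv hiota_inj,
    fun _ _ h => strictMono_span_image hfix hcorner hiota_equiv hiota_inj h⟩

theorem submodule_intersection_and_strictness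
    {R : Type} [CommRing R] [IsDomain R] {n r g : ℕ} {m : Fin r → ℕ}
    (hn : 0 < n) (hr : 0 < r) (hm : ∀ k, 0 < m k)
    {Λ : Finset (MultiComp n r m)} (hΛ : Saturated Λ)
    (SA : SchurAlgebra R Λ) (P : BlockCtx r g)
    (Sp : Subalgebra R SA.carrier)
    (hSp : (Sp : Set SA.carrier) =
      (Submodule.span R (SA.ZpSet P) : Submodule R SA.carrier))
    (lam : LamP Λ)
    (Z0 : BasedRightModule R ↥Sp {x : TabOf Λ lam // x ∈ pJp P (eZero P lam)})
    (hZ0 : SA.IsZpModule P Sp (eZero P lam) Z0)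
    (W : BasedRightModule R SA.carrier (TabOf Λ lam))
    (hW : SA.IsWeylModule lam W)
    -- the injection `ι : Z_p^{(λ,0)} → W^λ`, `φ_T^{(λ,0)} ↦ φ_T`
    (iota : Z0.M →ₗ[R] W.M)
    (hiota_bas : ∀ T : {x : TabOf Λ lam // x ∈ pJp P (eZero P lam)},
      iota (Z0.bas T) = W.bas T.1)
    (hiota_inj : Function.Injective iota)
    (hiota_equiv : ∀ (a : ↥Sp) (z : Z0.M),
      iota (MulOpposite.op a • z) = MulOpposite.op (a : SA.carrier) • iota z) :
    -- (i)
    (∀ M0 : Submodule (↥Sp)ᵐᵒᵖ Z0.M, ∀ x : Z0.M,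
      iota x ∈ Submodule.span SA.carrierᵐᵒᵖ (iota '' (M0 : Set Z0.M)) ↔
        x ∈ M0) ∧
    -- (ii)
    (∀ M1 M2 : Submodule (↥Sp)ᵐᵒᵖ Z0.M, M1 < M2 →
      Submodule.span SA.carrierᵐᵒᵖ (iota '' (M1 : Set Z0.M)) <
        Submodule.span SA.carrierᵐᵒᵖ (iota '' (M2 : Set Z0.M))) :=
  submodule_intersection_and_strictness_general SA P Sp hSp lam Z0 W hW iota hiota_bas hiota_inj
    hiota_equiv
end
end
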